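/- For the enhanced conflict graph G_{K,N} of a K×N switch with unicasts and broadcasts only, the imperfection ratio satisfies imp(G_{K,N}) ≤ (2K-1)/K. -/

import Mathlib

open Pointwise

/-- Vertices of the enhanced conflict graph of a `K × N` switch loaded with all
unicasts and one broadcast per input: `u i j` is the unicast subflow from input
`i` to output `j`, and `b i j` is the broadcast subflow from input `i` to
output `j`. -/
inductive SwitchVertex (K N : ℕ) where
  | u : Fin K → Fin N → SwitchVertex K N
  | b : Fin K → Fin N → SwitchVertex K N
deriving DecidableEq

namespace SwitchVertex

variable {K N : ℕ}

/-- The input of a subflow. -/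
def inp : SwitchVertex K N → Fin K
  | u i _ => i
  | b i _ => i

/-- The output of a subflow. -/
def out : SwitchVertex K N → Fin N
  | u _ j => j
  | b _ j => j

/-- Whether a subflow is a broadcast subflow. -/
def isBroadcast : SwitchVertex K N → Prop
  | u _ _ => False
  | b _ _ => True

end SwitchVertex

/-- The enhanced conflict graph `G_{K,N}`: two distinct subflows conflict iff they
share the output, or they share the input and are not both broadcast subflows
(broadcast subflows from the same input belong to the same flow, hence do not
conflict). -/
def GKN (K N : ℕ) : SimpleGraph (SwitchVertex K N) where
  Adj a b := a ≠ b ∧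
    (a.out = b.out ∨ (a.inp = b.inp ∧ ¬ (a.isBroadcast ∧ b.isBroadcast)))
  symm := by
    constructor
    rintro a b ⟨hne, h | ⟨h1, h2⟩⟩
    · exact ⟨hne.symm, Or.inl h.symm⟩
    · exact ⟨hne.symm, Or.inr ⟨h1.symm, fun hh => h2 ⟨hh.2, hh.1⟩⟩⟩
  loopless := by constructor; rintro a ⟨hne, _⟩; exact hne rfl

/-- A graph is perfect if for every induced subgraph the chromatic number equals
the clique number. -/
def SimpleGraph.IsPerfect {V : Type*} (G : SimpleGraph V) : Prop :=
  ∀ s : Set V, (G.induce s).chromaticNumber = ((G.induce s).cliqueNum : ℕ∞)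

open Pointwise


/-- The stable set polytope `STAB(G)`: the convex hull of the incidence vectors
of stable sets of `G`. -/
def stabPolytope {V : Type*} (G : SimpleGraph V) : Set (V → ℝ) :=
  convexHull ℝ {x | ∃ s : Finset V,
    (∀ u ∈ s, ∀ w ∈ s, ¬ G.Adj u w) ∧ x = Set.indicator (↑s) (fun _ => (1 : ℝ))}

/-- The fractional stable set polytope `QSTAB(G)`: nonnegativity together with
the clique inequalities. -/
def qstab {V : Type*} (G : SimpleGraph V) : Set (V → ℝ) :=
  {x | (∀ v, 0 ≤ x v) ∧
    ∀ Q : Finset V, (∀ u ∈ Q, ∀ w ∈ Q, u ≠ w → G.Adj u w) → ∑ v ∈ Q, x v ≤ 1}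

/-- The imperfection ratio `imp(G) = min { t : QSTAB(G) ⊆ t · STAB(G) }`. -/
noncomputable def impRatio {V : Type*} (G : SimpleGraph V) : ℝ :=
  sInf {t : ℝ | qstab G ⊆ t • stabPolytope G}

/-!
For `x ∈ QSTAB(G_{K,N})`, the restriction of `x` to the pure-unicast subgraph `G^u`, and for each
input `i` its restriction to the subgraph `G_i` on all broadcasts and the unicasts from `i`, lie in
`STAB(G_{K,N})`. Since `K - 1` copies of `G^u` and `G_1, …, G_K` cover every vertex exactly `K`
times, `K • x` is a sum of `2K - 1` points of `STAB`, so `x ∈ ((2K - 1) / K) • STAB`.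

The restriction to `G^u` is a doubly substochastic `K × N` matrix, hence a convex combination of
matchings by Birkhoff's theorem. The restriction to `G_i` is the expected indicator vector of a
random stable set, obtained from a fractional colouring of `G_i` by events in `[0,1)²`.
-/

open Set MeasureTheory

section StablePolytope

variable {V : Type*} (G : SimpleGraph V)

theorem impRatio_le {t : ℝ} (ht : 0 ≤ t) (h : qstab G ⊆ t • stabPolytope G) :
    impRatio G ≤ t := by
  by_cases hbdd : BddBelow {t : ℝ | qstab G ⊆ t • stabPolytope G}
  · exact csInf_le hbdd h
  · rw [impRatio, Real.sInf_of_not_bddBelow hbdd]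
    exact ht

theorem indicator_mem_stabPolytope {s : Finset V} (hs : ∀ u ∈ s, ∀ w ∈ s, ¬ G.Adj u w) :
    Set.indicator (↑s) (fun _ => (1 : ℝ)) ∈ stabPolytope G :=
  subset_convexHull ℝ _ ⟨s, hs, rfl⟩

theorem sum_le_one_of_mem_qstab {x : V → ℝ} (hx : x ∈ qstab G) {ι : Type*} [Fintype ι]
    {f : ι → V} (hf : Function.Injective f) (hclique : Pairwise fun a b => G.Adj (f a) (f b)) :
    ∑ a, x (f a) ≤ 1 := by
  classical
  have h := hx.2 (Finset.univ.map ⟨f, hf⟩) (by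
    simp only [Finset.mem_map, Finset.mem_univ, true_and, Function.Embedding.coeFn_mk]
    rintro _ ⟨a, rfl⟩ _ ⟨b, rfl⟩ hne
    exact hclique fun hab => hne (congrArg f hab))
  rwa [Finset.sum_map] at h

variable [Fintype V]

theorem isClosed_stabPolytope : IsClosed (stabPolytope G) := by
  have hfin : {x : V → ℝ | ∃ s : Finset V, (∀ u ∈ s, ∀ w ∈ s, ¬ G.Adj u w) ∧
      x = Set.indicator (↑s) fun _ => (1 : ℝ)}.Finite := by
    refine (Set.finite_range fun s : Finset V => Set.indicator (↑s) fun _ => (1 : ℝ)).subset ?_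
    rintro _ ⟨s, -, rfl⟩
    exact ⟨s, rfl⟩
  exact (hfin.isCompact_convexHull (𝕜 := ℝ)).isClosed

/-- The point is the expectation of the indicator vector of the random stable set
`{v | ω ∈ E v}`. -/
theorem measureReal_mem_stabPolytope {Ω : Type*} [MeasurableSpace Ω] (μ : Measure Ω)
    [IsProbabilityMeasure μ] {E : V → Set Ω} (hE : ∀ v, MeasurableSet (E v))
    (hdisj : ∀ v w, G.Adj v w → Disjoint (E v) (E w)) :
    (fun v => μ.real (E v)) ∈ stabPolytope G := by
  classical
  set f : Ω → V → ℝ := fun ω v => (E v).indicator 1 ω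
  have hf : ∀ v, Integrable (f · v) μ := fun v => (integrable_const 1).indicator (hE v)
  have hmem : ∀ ω, f ω ∈ stabPolytope G := by
    intro ω
    convert indicator_mem_stabPolytope G (s := Finset.univ.filter fun v => ω ∈ E v) ?_
    · ext v
      by_cases h : ω ∈ E v <;> simp [f, h]
    · simp only [Finset.mem_filter, Finset.mem_univ, true_and]
      exact fun v hv w hw hadj => Set.disjoint_left.1 (hdisj v w hadj) hv hw
  have hint := (convex_convexHull ℝ _).integral_mem (isClosed_stabPolytope G)
    (Filter.Eventually.of_forall hmem) (Integrable.of_eval hf)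
  suffices (∫ ω, f ω ∂μ) = fun v => μ.real (E v) from this ▸ hint
  ext v
  rw [eval_integral hf, integral_indicator_one (hE v)]

end StablePolytope

theorem Set.Ico_disjoint_Ico_of_le {α : Type*} [LinearOrder α] {a b c d : α} (h : b ≤ c) :
    Disjoint (Ico a b) (Ico c d) :=
  Ico_disjoint_Ico.2 ((min_le_left _ _).trans (h.trans (le_max_right _ _)))

section PrefixSum

variable {ι : Type*} [LinearOrder ι] [LocallyFiniteOrderBot ι]

def prefixSum (w : ι → ℝ) (k : ι) : ℝ := ∑ l ∈ Finset.Iio k, w l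

def prefixIco (w : ι → ℝ) (k : ι) : Set ℝ := Ico (prefixSum w k) (prefixSum w k + w k)

variable {w : ι → ℝ}

theorem prefixSum_nonneg (hw : ∀ k, 0 ≤ w k) (k : ι) : 0 ≤ prefixSum w k :=
  Finset.sum_nonneg fun l _ => hw l

theorem prefixSum_add_eq (k : ι) : prefixSum w k + w k = ∑ l ∈ Finset.Iic k, w l := by
  rw [prefixSum, add_comm, ← Finset.sum_insert Finset.notMem_Iio_self, Finset.Iio_insert]

theorem prefixSum_add_le_of_lt (hw : ∀ k, 0 ≤ w k) {k l : ι} (hkl : k < l) :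
    prefixSum w k + w k ≤ prefixSum w l := by
  rw [prefixSum_add_eq]
  refine Finset.sum_le_sum_of_subset_of_nonneg (fun m hm => ?_) fun m _ _ => hw m
  exact Finset.mem_Iio.2 ((Finset.mem_Iic.1 hm).trans_lt hkl)

theorem pairwise_disjoint_prefixIco (hw : ∀ k, 0 ≤ w k) :
    Pairwise (Function.onFun Disjoint (prefixIco w)) := by
  intro k l hkl
  rcases hkl.lt_or_gt with h | h
  · exact Ico_disjoint_Ico_of_le (prefixSum_add_le_of_lt hw h)
  · exact (Ico_disjoint_Ico_of_le (prefixSum_add_le_of_lt hw h)).symm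

variable [Fintype ι]

theorem prefixSum_add_le_sum (hw : ∀ k, 0 ≤ w k) (k : ι) :
    prefixSum w k + w k ≤ ∑ l, w l := by
  rw [prefixSum_add_eq]
  exact Finset.sum_le_sum_of_subset_of_nonneg (Finset.subset_univ _) fun l _ _ => hw l

theorem prefixIco_subset (hw : ∀ k, 0 ≤ w k) (k : ι) : prefixIco w k ⊆ Ico 0 (∑ l, w l) :=
  Ico_subset_Ico (prefixSum_nonneg hw k) (prefixSum_add_le_sum hw k)

end PrefixSum

namespace Matrix

variable {m n : Type*} [Fintype m] [Fintype n] [DecidableEq m] [DecidableEq n]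

/-- Pad `B` to the doubly stochastic matrix `[[diag (1 - row sums), B], [Bᵀ, diag (1 - column
sums)]]` and apply Birkhoff's theorem. -/
theorem mem_convexHull_toBlocks₁₂_permMatrix {B : Matrix m n ℝ} (hB : ∀ i j, 0 ≤ B i j)
    (hrow : ∀ i, ∑ j, B i j ≤ 1) (hcol : ∀ j, ∑ i, B i j ≤ 1) :
    B ∈ convexHull ℝ {(σ.permMatrix ℝ).toBlocks₁₂ | σ : Equiv.Perm (m ⊕ n)} := by
  set M := fromBlocks (diagonal fun i => 1 - ∑ j, B i j) B Bᵀ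
    (diagonal fun j => 1 - ∑ i, B i j)
  have hM : M ∈ doublyStochastic ℝ (m ⊕ n) := by
    refine mem_doublyStochastic_iff_sum.2 ⟨?_, ?_, ?_⟩
    · rintro (i | j) (i' | j') <;>
        simp [M, diagonal_apply, apply_ite, hB, hrow, hcol]
    · rintro (i | j) <;> simp [M, Fintype.sum_sum_type, diagonal_apply]
    · rintro (i | j) <;> simp [M, Fintype.sum_sum_type, diagonal_apply]
  let toBlocks₁₂ₗ : Matrix (m ⊕ n) (m ⊕ n) ℝ →ₗ[ℝ] Matrix m n ℝ :=
    { toFun := Matrix.toBlocks₁₂, map_add' := fun _ _ => rfl, map_smul' := fun _ _ => rfl }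
  have hB_eq : toBlocks₁₂ₗ M = B := toBlocks_fromBlocks₁₂ _ _ _ _
  replace hM : M ∈ convexHull ℝ {σ.permMatrix ℝ | σ : Equiv.Perm (m ⊕ n)} := by
    rwa [← doublyStochastic_eq_convexHull_permMatrix]
  have hmem := Set.mem_image_of_mem toBlocks₁₂ₗ hM
  rw [LinearMap.image_convexHull, hB_eq, ← Set.range, ← Set.range_comp] at hmem
  exact hmem

end Matrix

theorem measureReal_restrict_Ico_zero_one {p q : ℝ} (hp : 0 ≤ p) (hpq : p ≤ q)
    (hq : q ≤ 1) :
    (volume.restrict (Ico (0 : ℝ) 1)).real (Ico p q) = q - p := by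
  rw [measureReal_def, Measure.restrict_eq_self _ (Ico_subset_Ico hp hq), ← measureReal_def,
    Real.volume_real_Ico_of_le hpq]

instance : IsProbabilityMeasure (volume.restrict (Ico (0 : ℝ) 1)) :=
  ⟨by simp⟩

namespace SwitchVertex

variable {K N : ℕ}

def equivSum (K N : ℕ) : (Fin K × Fin N) ⊕ (Fin K × Fin N) ≃ SwitchVertex K N where
  toFun
    | .inl (i, j) => u i j
    | .inr (i, j) => b i j
  invFun
    | u i j => .inl (i, j)
    | b i j => .inr (i, j)
  left_inv := by rintro (⟨i, j⟩ | ⟨i, j⟩) <;> rfl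
  right_inv := by rintro (v | v) <;> rfl

instance : Fintype (SwitchVertex K N) := Fintype.ofEquiv _ (equivSum K N)

end SwitchVertex

namespace GKN

open SwitchVertex

variable {K N : ℕ}

@[simp] theorem adj_u_u {i i' : Fin K} {j j' : Fin N} :
    (GKN K N).Adj (u i j) (u i' j') ↔ (i ≠ i' ∨ j ≠ j') ∧ (j = j' ∨ i = i') := by
  simp [GKN, inp, out, isBroadcast, or_iff_not_imp_left]

@[simp] theorem adj_u_b {i i' : Fin K} {j j' : Fin N} :
    (GKN K N).Adj (u i j) (b i' j') ↔ j = j' ∨ i = i' := by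
  simp [GKN, inp, out, isBroadcast]

@[simp] theorem adj_b_u {i i' : Fin K} {j j' : Fin N} :
    (GKN K N).Adj (b i j) (u i' j') ↔ j = j' ∨ i = i' := by
  simp [GKN, inp, out, isBroadcast]

@[simp] theorem adj_b_b {i i' : Fin K} {j j' : Fin N} :
    (GKN K N).Adj (b i j) (b i' j') ↔ i ≠ i' ∧ j = j' := by
  simp [GKN, inp, out, isBroadcast]
  tauto

variable {x : SwitchVertex K N → ℝ}

theorem sum_u_row_le (hx : x ∈ qstab (GKN K N)) (i : Fin K) : ∑ j, x (u i j) ≤ 1 :=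
  sum_le_one_of_mem_qstab _ hx (f := u i) (fun _ _ h => by cases h; rfl) fun _ _ h => by simp [h]

theorem sum_u_col_le (hx : x ∈ qstab (GKN K N)) (j : Fin N) : ∑ i, x (u i j) ≤ 1 :=
  sum_le_one_of_mem_qstab _ hx (f := (u · j)) (fun _ _ h => by cases h; rfl)
    fun _ _ h => by simp [h]

theorem sum_u_row_add_b_le (hx : x ∈ qstab (GKN K N)) (i : Fin K) (j : Fin N) :
    ∑ j', x (u i j') + x (b i j) ≤ 1 := by
  have h := sum_le_one_of_mem_qstab _ hx (f := fun o : Option (Fin N) => o.elim (b i j) (u i))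
    (by rintro (_ | j₁) (_ | j₂) h <;> cases h <;> rfl) (by
      rintro (_ | j₁) (_ | j₂) h <;> simp_all)
  rwa [Fintype.sum_option, add_comm] at h

theorem u_add_sum_b_col_le (hx : x ∈ qstab (GKN K N)) (i : Fin K) (j : Fin N) :
    x (u i j) + ∑ i', x (b i' j) ≤ 1 := by
  have h := sum_le_one_of_mem_qstab _ hx (f := fun o : Option (Fin K) => o.elim (u i j) (b · j))
    (by rintro (_ | i₁) (_ | i₂) h <;> cases h <;> rfl) (by
      rintro (_ | i₁) (_ | i₂) h <;> simp_all)
  rwa [Fintype.sum_option] at h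

/-- The vertex set of the pure-unicast subgraph `G^u`. -/
def unicasts (K N : ℕ) : Set (SwitchVertex K N) := {v | ¬ v.isBroadcast}

def unicastsOfMatrix (K N : ℕ) :
    Matrix (Fin K) (Fin N) ℝ →ₗ[ℝ] (SwitchVertex K N → ℝ) where
  toFun B
    | u i j => B i j
    | b _ _ => 0
  map_add' B C := by ext (⟨i, j⟩ | ⟨i, j⟩) <;> simp
  map_smul' c B := by ext (⟨i, j⟩ | ⟨i, j⟩) <;> simp

theorem unicastsOfMatrix_toBlocks₁₂_mem_stabPolytope (σ : Equiv.Perm (Fin K ⊕ Fin N)) :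
    unicastsOfMatrix K N (σ.permMatrix ℝ).toBlocks₁₂ ∈ stabPolytope (GKN K N) := by
  classical
  let matched : SwitchVertex K N → Prop
    | u i j => σ (.inl i) = .inr j
    | b _ _ => False
  convert indicator_mem_stabPolytope (GKN K N) (s := Finset.univ.filter matched) ?_
  · ext (⟨i, j⟩ | ⟨i, j⟩) <;>
      simp [unicastsOfMatrix, matched, Equiv.Perm.permMatrix, Matrix.toBlocks₁₂,
        PEquiv.toMatrix_apply, Set.indicator_apply, eq_comm]
  · simp only [Finset.mem_filter, Finset.mem_univ, true_and]
    rintro (⟨i, j⟩ | ⟨i, j⟩) hv (⟨i', j'⟩ | ⟨i', j'⟩) hw hadj <;>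
      simp only [matched] at hv hw
    obtain ⟨hne, rfl | rfl⟩ := adj_u_u.1 hadj
    · have := σ.injective (hv.trans hw.symm)
      simp_all
    · simp_all

theorem indicator_unicasts_mem_stabPolytope (hx : x ∈ qstab (GKN K N)) :
    (unicasts K N).indicator x ∈ stabPolytope (GKN K N) := by
  have hB := Matrix.mem_convexHull_toBlocks₁₂_permMatrix (B := fun i j => x (u i j))
    (fun _ _ => hx.1 _) (sum_u_row_le hx) (sum_u_col_le hx)
  have hx_eq : unicastsOfMatrix K N (fun i j => x (u i j)) = (unicasts K N).indicator x := by
    ext (⟨i, j⟩ | ⟨i, j⟩) <;> simp [unicastsOfMatrix, unicasts, isBroadcast]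
  have himage := Set.mem_image_of_mem (unicastsOfMatrix K N) hB
  rw [LinearMap.image_convexHull, hx_eq] at himage
  refine convexHull_min ?_ (convex_convexHull ℝ _) himage
  rintro _ ⟨_, ⟨σ, rfl⟩, rfl⟩
  exact unicastsOfMatrix_toBlocks₁₂_mem_stabPolytope σ

/-- The vertex set of the subgraph `G_i`. -/
def broadcastsAndUnicastsFrom (i : Fin K) : Set (SwitchVertex K N) :=
  {v | v.isBroadcast ∨ v.inp = i}

section InputEvents

variable (x) (i : Fin K)

def unicastSlot (j : Fin N) : Set ℝ := prefixIco (fun j' => x (u i j')) j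

def broadcastSlot (j : Fin N) : Set ℝ :=
  Ico (∑ j', x (u i j')) (∑ j', x (u i j') + x (b i j))

noncomputable def freeShare (j : Fin N) (i' : Fin K) : ℝ :=
  (if i' = i then 0 else x (b i' j)) / (1 - x (u i j) - x (b i j))

/-- Events in `[0,1)²` forming a fractional colouring of `G_i`. Along the first coordinate the
unicasts from input `i` are laid end to end on `[0, A)`, `A = ∑ j, x (u i j)`, and `b i j`
occupies `[A, A + x (b i j))`. The other broadcasts to output `j` share the rest of the first
coordinate, of length `1 - x (u i j) - x (b i j)`, by splitting the second coordinate in the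
proportions `freeShare x i j`. -/
def inputEvents : SwitchVertex K N → Set (ℝ × ℝ)
  | u i' j => if i' = i then unicastSlot x i j ×ˢ univ else ∅
  | b i' j => if i' = i then broadcastSlot x i j ×ˢ univ else
      (unicastSlot x i j ∪ broadcastSlot x i j)ᶜ ×ˢ prefixIco (freeShare x i j) i'

theorem measurableSet_inputEvents (v : SwitchVertex K N) : MeasurableSet (inputEvents x i v) := by
  rcases v with ⟨i', j⟩ | ⟨i', j⟩ <;> simp only [inputEvents] <;> split_ifs <;>
    first
    | exact MeasurableSet.empty
    | exact measurableSet_Ico.prod MeasurableSet.univ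
    | exact (measurableSet_Ico.union measurableSet_Ico).compl.prod measurableSet_Ico

variable {x}

theorem sum_erase_b_le (hx : x ∈ qstab (GKN K N)) (j : Fin N) :
    ∑ i' ∈ Finset.univ.erase i, x (b i' j) ≤ 1 - x (u i j) - x (b i j) := by
  rw [Finset.sum_erase_eq_sub (Finset.mem_univ i)]
  linarith [u_add_sum_b_col_le hx i j]

theorem b_le_of_ne (hx : x ∈ qstab (GKN K N)) (j : Fin N) {i' : Fin K} (hi' : i' ≠ i) :
    x (b i' j) ≤ 1 - x (u i j) - x (b i j) :=
  (Finset.single_le_sum (fun k _ => hx.1 (b k j))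
    (Finset.mem_erase.2 ⟨hi', Finset.mem_univ _⟩)).trans (sum_erase_b_le i hx j)

theorem freeShare_nonneg (hx : x ∈ qstab (GKN K N)) (j : Fin N) (i' : Fin K) :
    0 ≤ freeShare x i j i' := by
  rcases eq_or_ne i' i with rfl | hi'
  · simp [freeShare]
  · exact div_nonneg (by simp [hi', hx.1]) ((hx.1 _).trans (b_le_of_ne i hx j hi'))

theorem sum_freeShare_le_one (hx : x ∈ qstab (GKN K N)) (j : Fin N) :
    ∑ i', freeShare x i j i' ≤ 1 := by
  have hr := sum_erase_b_le i hx j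
  simp only [freeShare, ← Finset.sum_div, Finset.sum_ite, Finset.filter_ne',
    Finset.sum_const_zero, zero_add]
  exact div_le_one_of_le₀ hr ((Finset.sum_nonneg fun k _ => hx.1 (b k j)).trans hr)

theorem mul_freeShare (hx : x ∈ qstab (GKN K N)) (j : Fin N) {i' : Fin K} (hi' : i' ≠ i) :
    (1 - x (u i j) - x (b i j)) * freeShare x i j i' = x (b i' j) := by
  have hle := b_le_of_ne i hx j hi'
  simp only [freeShare, hi', if_false]
  rcases (hx.1 (b i' j)).trans hle |>.eq_or_lt with hr | hr
  · rw [← hr, zero_mul]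
    linarith [hx.1 (b i' j)]
  · exact mul_div_cancel₀ _ hr.ne'

theorem disjoint_inputEvents (hx : x ∈ qstab (GKN K N)) {v w : SwitchVertex K N}
    (hvw : (GKN K N).Adj v w) : Disjoint (inputEvents x i v) (inputEvents x i w) := by
  have hU : Pairwise (Function.onFun Disjoint (unicastSlot x i)) :=
    pairwise_disjoint_prefixIco fun _ => hx.1 _
  have hUB (j j' : Fin N) : Disjoint (unicastSlot x i j) (broadcastSlot x i j') :=
    (Ico_disjoint_Ico_of_le le_rfl).mono_left (prefixIco_subset (fun _ => hx.1 _) j)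
  have hW (j : Fin N) : Pairwise (Function.onFun Disjoint (prefixIco (freeShare x i j))) :=
    pairwise_disjoint_prefixIco (freeShare_nonneg i hx j)
  have hUF (j : Fin N) :
      Disjoint (unicastSlot x i j) (unicastSlot x i j ∪ broadcastSlot x i j)ᶜ :=
    disjoint_compl_right.mono_left subset_union_left
  have hBF (j : Fin N) :
      Disjoint (broadcastSlot x i j) (unicastSlot x i j ∪ broadcastSlot x i j)ᶜ :=
    disjoint_compl_right.mono_left subset_union_right
  rcases v with ⟨i₁, j₁⟩ | ⟨i₁, j₁⟩ <;> rcases w with ⟨i₂, j₂⟩ | ⟨i₂, j₂⟩ <;>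
    simp only [inputEvents] <;> split_ifs with h₁ h₂ <;> subst_vars <;>
    simp only [disjoint_prod, Set.disjoint_empty, Set.empty_disjoint] <;>
    simp at hvw
  all_goals first
    | exact Or.inl (hU hvw)
    | exact Or.inl (hUB _ _)
    | exact Or.inl (hUB _ _).symm
    | obtain rfl : j₁ = j₂ := by grind
      first
      | exact Or.inl (hUF _)
      | exact Or.inl (hUF _).symm
      | exact Or.inl (hBF _)
      | exact Or.inl (hBF _).symm
      | exact Or.inr (hW _ hvw.1)

theorem measureReal_inputEvents (hx : x ∈ qstab (GKN K N)) (v : SwitchVertex K N) :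
    ((volume.restrict (Ico (0 : ℝ) 1)).prod (volume.restrict (Ico (0 : ℝ) 1))).real
      (inputEvents x i v) = (broadcastsAndUnicastsFrom i).indicator x v := by
  set ν := volume.restrict (Ico (0 : ℝ) 1)
  have ha : ∀ j, 0 ≤ x (u i j) := fun _ => hx.1 _
  have hU (j : Fin N) : ν.real (unicastSlot x i j) = x (u i j) := by
    have hA := sum_u_row_add_b_le hx i j
    rw [unicastSlot, prefixIco, measureReal_restrict_Ico_zero_one (prefixSum_nonneg ha j)
      (le_add_of_nonneg_right (ha j)) (by linarith [prefixSum_add_le_sum ha j, hx.1 (b i j)])]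
    ring
  have hB (j : Fin N) : ν.real (broadcastSlot x i j) = x (b i j) := by
    rw [broadcastSlot, measureReal_restrict_Ico_zero_one (Finset.sum_nonneg fun j _ => ha j)
      (le_add_of_nonneg_right (hx.1 _)) (sum_u_row_add_b_le hx i j)]
    ring
  have hF (j : Fin N) :
      ν.real (unicastSlot x i j ∪ broadcastSlot x i j)ᶜ = 1 - x (u i j) - x (b i j) := by
    have hm : MeasurableSet (unicastSlot x i j ∪ broadcastSlot x i j) :=
      measurableSet_Ico.union measurableSet_Ico
    have hd : Disjoint (unicastSlot x i j) (broadcastSlot x i j) :=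
      (Ico_disjoint_Ico_of_le le_rfl).mono_left (prefixIco_subset ha j)
    rw [probReal_compl_eq_one_sub hm, measureReal_union hd measurableSet_Ico, hU, hB]
    ring
  have hW (j : Fin N) (i' : Fin K) :
      ν.real (prefixIco (freeShare x i j) i') = freeShare x i j i' := by
    have hw := freeShare_nonneg i hx j
    rw [prefixIco, measureReal_restrict_Ico_zero_one (prefixSum_nonneg hw i')
      (le_add_of_nonneg_right (hw i'))
      ((prefixSum_add_le_sum hw i').trans (sum_freeShare_le_one i hx j))]
    ring
  rcases v with ⟨i', j⟩ | ⟨i', j⟩ <;> by_cases h : i' = i <;>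
    simp only [inputEvents, broadcastsAndUnicastsFrom, h, if_true, if_false]
  · simp [measureReal_prod_prod, hU, inp]
  · simp [inp, isBroadcast, h]
  · simp [measureReal_prod_prod, hB, isBroadcast]
  · rw [measureReal_prod_prod, hF, hW, mul_freeShare i hx j h]
    simp [isBroadcast]

end InputEvents

theorem indicator_broadcastsAndUnicastsFrom_mem_stabPolytope {x : SwitchVertex K N → ℝ}
    (hx : x ∈ qstab (GKN K N)) (i : Fin K) :
    (broadcastsAndUnicastsFrom i).indicator x ∈ stabPolytope (GKN K N) := by
  have h := measureReal_mem_stabPolytope (GKN K N)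
    ((volume.restrict (Ico (0 : ℝ) 1)).prod (volume.restrict (Ico (0 : ℝ) 1)))
    (measurableSet_inputEvents x i) (fun _ _ => disjoint_inputEvents i hx)
  simpa only [measureReal_inputEvents i hx] using h

theorem smul_indicator_unicasts_add_sum_indicator (x : SwitchVertex K N → ℝ) :
    ((K : ℝ) - 1) • (unicasts K N).indicator x +
      ∑ i, (broadcastsAndUnicastsFrom i).indicator x = (K : ℝ) • x := by
  ext (⟨i, j⟩ | ⟨i, j⟩) <;>
    simp [unicasts, broadcastsAndUnicastsFrom, isBroadcast, inp, Set.indicator_apply, eq_comm]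
  ring

theorem qstab_subset_smul_stabPolytope (hK : 0 < K) :
    qstab (GKN K N) ⊆ ((2 * (K : ℝ) - 1) / K) • stabPolytope (GKN K N) := by
  intro x hx
  have hK' : (1 : ℝ) ≤ K := Nat.one_le_cast.2 hK
  let w : Option (Fin K) → ℝ := fun o => o.elim ((K : ℝ) - 1) fun _ => 1
  let p : Option (Fin K) → SwitchVertex K N → ℝ := fun o =>
    o.elim ((unicasts K N).indicator x) fun i => (broadcastsAndUnicastsFrom i).indicator x
  have hw : ∑ o, w o = 2 * K - 1 := by simp [w, Fintype.sum_option]; ring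
  have hmem : Finset.univ.centerMass w p ∈ stabPolytope (GKN K N) :=
    (convex_convexHull ℝ _).centerMass_mem (by rintro (_ | _) - <;> simp [w, hK'])
      (by rw [hw]; linarith) (by
        rintro (_ | i) -
        exacts [indicator_unicasts_mem_stabPolytope hx,
          indicator_broadcastsAndUnicastsFrom_mem_stabPolytope hx i])
  have hcenter : Finset.univ.centerMass w p = ((2 * (K : ℝ) - 1) / K)⁻¹ • x := by
    rw [Finset.centerMass, hw, Fintype.sum_option]
    simp only [w, p, Option.elim, one_smul]
    rw [smul_indicator_unicasts_add_sum_indicator, smul_smul, inv_div, div_eq_inv_mul]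
  refine Set.mem_smul_set.2 ⟨_, hmem, ?_⟩
  rw [hcenter, smul_inv_smul₀ (div_pos (by linarith) (by linarith)).ne']

end GKN

/-- For the enhanced conflict graph of a `K × N` switch with unicasts and
broadcasts only, the imperfection ratio is at most `(2K - 1) / K`. -/
theorem stmt11 (K N : ℕ) (hK : 0 < K) :
    impRatio (GKN K N) ≤ (2 * (K : ℝ) - 1) / K :=
  impRatio_le _ (div_nonneg (by linarith [(Nat.one_le_cast (α := ℝ)).2 hK]) K.cast_nonneg)
    (GKN.qstab_subset_smul_stabPolytope hK)
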